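/- Let C̃ ∈ ℝ^{m×d} and A ∈ ℝ^{m×n}, and let P denote the orthogonal projection onto the column span of C̃. Suppose every column of A lies in the column span of a matrix C with ‖(C̃ - C)‖₂ ≤ η and σ_min(C) ≥ 2η/√ε for ε ∈ (0,1), where C̃ and C have the same rank and C has full column rank. Then ‖(I - P)A‖_F ≤ √ε·‖A‖_F. -/

import Mathlib

/-!
Write a column `a` of `A` as `a = C x`. Since `I - P` annihilates `range C̃`,
`(I - P) a = (I - P) (C - C̃) x`, so `‖(I - P) a‖ ≤ η ‖x‖`, while `σ_min(C) ‖x‖ ≤ ‖C x‖ = ‖a‖`.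
The hypothesis on `σ_min(C)` gives `η ≤ √ε σ_min(C)`, hence `‖(I - P) a‖² ≤ ε ‖a‖²`; summing over
the columns gives the Frobenius bound.
-/

open Matrix

noncomputable def frobSq {m n : ℕ} (A : Matrix (Fin m) (Fin n) ℝ) : ℝ :=
  ∑ i, ∑ j, (A i j)^2

noncomputable def svalSq {m n : ℕ} (A : Matrix (Fin m) (Fin n) ℝ) (i : Fin n) : ℝ :=
  let eigs := (show (Aᵀ * A).IsHermitian by
    simpa [Matrix.conjTranspose_eq_transpose_of_trivial] using
      Matrix.isHermitian_conjTranspose_mul_self A).eigenvalues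
  eigs (Tuple.sort eigs i.rev)

noncomputable def specNorm {m n : ℕ} (A : Matrix (Fin m) (Fin n) ℝ) : ℝ :=
  ‖LinearMap.toContinuousLinearMap (Matrix.toEuclideanLin A)‖

def colSpan {m n : ℕ} (A : Matrix (Fin m) (Fin n) ℝ) : Submodule ℝ (Fin m → ℝ) :=
  LinearMap.range A.mulVecLin

def IsProjOnto {m : ℕ} (P : Matrix (Fin m) (Fin m) ℝ) (K : Submodule ℝ (Fin m → ℝ)) : Prop :=
  Pᵀ = P ∧ P * P = P ∧ LinearMap.range P.mulVecLin = K

noncomputable def enorm' {n : ℕ} (x : Fin n → ℝ) : ℝ := Real.sqrt (∑ i, (x i)^2)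

open scoped MatrixOrder

lemma frobSq_eq_sum_dotProduct_col {m n : ℕ} (A : Matrix (Fin m) (Fin n) ℝ) :
    frobSq A = ∑ j, A.col j ⬝ᵥ A.col j := by
  rw [frobSq, Finset.sum_comm]
  simp only [dotProduct, col_apply, sq]

lemma Matrix.col_mul {ι κ μ : Type*} [Fintype κ] (B : Matrix ι κ ℝ) (A : Matrix κ μ ℝ) (j : μ) :
    (B * A).col j = B *ᵥ A.col j := by
  ext i
  simp only [col_apply, mul_apply, mulVec, dotProduct]

lemma col_mem_colSpan {m n : ℕ} (A : Matrix (Fin m) (Fin n) ℝ) (j : Fin n) :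
    A.col j ∈ colSpan A :=
  ⟨Pi.single j 1, mulVec_single_one A j⟩

lemma dotProduct_mulVec_self_le_specNorm_sq {m n : ℕ} (M : Matrix (Fin m) (Fin n) ℝ)
    (x : Fin n → ℝ) : (M *ᵥ x) ⬝ᵥ (M *ᵥ x) ≤ specNorm M ^ 2 * (x ⬝ᵥ x) := by
  have h := (toEuclideanLin M).toContinuousLinearMap.le_opNorm (WithLp.toLp 2 x)
  have hsq := pow_le_pow_left₀ (norm_nonneg _) h 2
  have hnorm : ∀ {k : ℕ} (v : Fin k → ℝ), ‖WithLp.toLp 2 v‖ ^ 2 = v ⬝ᵥ v := fun v => by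
    rw [← real_inner_self_eq_norm_sq, EuclideanSpace.inner_eq_star_dotProduct, star_trivial]
  rwa [LinearMap.coe_toContinuousLinearMap', toLpLin_toLp, toLin'_apply, mul_pow, hnorm, hnorm]
    at hsq

lemma Matrix.IsHermitian.mul_dotProduct_self_le {ι : Type*} [Fintype ι] [DecidableEq ι]
    {M : Matrix ι ι ℝ} (hM : M.IsHermitian) {c : ℝ} (hc : ∀ i, c ≤ hM.eigenvalues i)
    (x : ι → ℝ) : c * (x ⬝ᵥ x) ≤ x ⬝ᵥ M *ᵥ x := by
  have hle : algebraMap ℝ _ c ≤ M := by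
    rw [algebraMap_le_iff_le_spectrum hM.isSelfAdjoint, hM.spectrum_real_eq_range_eigenvalues]
    rintro _ ⟨i, rfl⟩
    exact hc i
  simpa only [star_trivial, Algebra.algebraMap_eq_smul_one, sub_mulVec, smul_mulVec, one_mulVec,
    dotProduct_sub, dotProduct_smul, smul_eq_mul, sub_nonneg]
    using (le_iff.1 hle).dotProduct_mulVec_nonneg x

lemma svalSq_last_le_eigenvalues {m d : ℕ} (hd : 0 < d) (C : Matrix (Fin m) (Fin d) ℝ)
    (j : Fin d) :
    svalSq C ⟨d - 1, Nat.sub_one_lt_of_lt hd⟩ ≤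
      (isHermitian_conjTranspose_mul_self C).eigenvalues j := by
  have hrev : (⟨d - 1, Nat.sub_one_lt_of_lt hd⟩ : Fin d).rev = ⟨0, hd⟩ := by
    ext
    simp only [Fin.val_rev]
    omega
  set eigs := (isHermitian_conjTranspose_mul_self C).eigenvalues
  change eigs (Tuple.sort eigs (⟨d - 1, Nat.sub_one_lt_of_lt hd⟩ : Fin d).rev) ≤ eigs j
  have hmono := Tuple.monotone_sort eigs (a := ⟨0, hd⟩) (b := (Tuple.sort eigs).symm j)
    (Fin.le_def.2 (Nat.zero_le _))
  rwa [Function.comp_apply, Function.comp_apply, Equiv.apply_symm_apply, ← hrev] at hmono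

lemma svalSq_last_mul_dotProduct_le {m d : ℕ} (hd : 0 < d) (C : Matrix (Fin m) (Fin d) ℝ)
    (x : Fin d → ℝ) :
    svalSq C ⟨d - 1, Nat.sub_one_lt_of_lt hd⟩ * (x ⬝ᵥ x) ≤ (C *ᵥ x) ⬝ᵥ (C *ᵥ x) := by
  have h := (isHermitian_conjTranspose_mul_self C).mul_dotProduct_self_le
    (svalSq_last_le_eigenvalues hd C) x
  rwa [← mulVec_mulVec, dotProduct_mulVec, conjTranspose_eq_transpose_of_trivial,
    vecMul_transpose, dotProduct_comm] at h

section Projection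

variable {m : ℕ} {P : Matrix (Fin m) (Fin m) ℝ} {K : Submodule ℝ (Fin m → ℝ)}

lemma dotProduct_mulVec_self_of_symm_idem {ι : Type*} [Fintype ι] {Q : Matrix ι ι ℝ}
    (hsym : Qᵀ = Q) (hidem : Q * Q = Q) (w : ι → ℝ) :
    (Q *ᵥ w) ⬝ᵥ (Q *ᵥ w) = w ⬝ᵥ Q *ᵥ w := by
  rw [dotProduct_comm, dotProduct_mulVec, ← mulVec_transpose, hsym, mulVec_mulVec, hidem,
    dotProduct_comm]

lemma IsProjOnto.one_sub_mulVec_eq_zero (hP : IsProjOnto P K) {v : Fin m → ℝ} (hv : v ∈ K) :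
    (1 - P) *ᵥ v = 0 := by
  obtain ⟨u, rfl⟩ := hP.2.2 ▸ hv
  rw [mulVecLin_apply, sub_mulVec, one_mulVec, mulVec_mulVec, hP.2.1, sub_self]

lemma IsProjOnto.dotProduct_one_sub_mulVec_self_le (hP : IsProjOnto P K) (w : Fin m → ℝ) :
    ((1 - P) *ᵥ w) ⬝ᵥ ((1 - P) *ᵥ w) ≤ w ⬝ᵥ w := by
  obtain ⟨hsym, hidem, -⟩ := hP
  have hsym' : (1 - P)ᵀ = 1 - P := by rw [transpose_sub, transpose_one, hsym]
  have hidem' : (1 - P) * (1 - P) = 1 - P := by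
    rw [sub_mul, mul_sub, mul_sub, one_mul, one_mul, mul_one, hidem, sub_self, sub_zero]
  have hP_nonneg : 0 ≤ w ⬝ᵥ P *ᵥ w :=
    dotProduct_mulVec_self_of_symm_idem hsym hidem w ▸ dotProduct_self_star_nonneg _
  rw [dotProduct_mulVec_self_of_symm_idem hsym' hidem', sub_mulVec, one_mulVec, dotProduct_sub]
  linarith

lemma IsProjOnto.dotProduct_one_sub_mulVec_le_specNorm {d : ℕ} {C Ct : Matrix (Fin m) (Fin d) ℝ}
    (hP : IsProjOnto P (colSpan Ct)) (x : Fin d → ℝ) :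
    ((1 - P) *ᵥ (C *ᵥ x)) ⬝ᵥ ((1 - P) *ᵥ (C *ᵥ x)) ≤ specNorm (Ct - C) ^ 2 * (x ⬝ᵥ x) := by
  have hCt : (1 - P) *ᵥ (Ct *ᵥ x) = 0 := hP.one_sub_mulVec_eq_zero ⟨x, rfl⟩
  have hres : (1 - P) *ᵥ (C *ᵥ x) = -((1 - P) *ᵥ ((Ct - C) *ᵥ x)) := by
    rw [sub_mulVec Ct C x, mulVec_sub, hCt, zero_sub, neg_neg]
  calc ((1 - P) *ᵥ (C *ᵥ x)) ⬝ᵥ ((1 - P) *ᵥ (C *ᵥ x))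
      = ((1 - P) *ᵥ ((Ct - C) *ᵥ x)) ⬝ᵥ ((1 - P) *ᵥ ((Ct - C) *ᵥ x)) := by
        rw [hres, neg_dotProduct, dotProduct_neg, neg_neg]
    _ ≤ ((Ct - C) *ᵥ x) ⬝ᵥ ((Ct - C) *ᵥ x) := hP.dotProduct_one_sub_mulVec_self_le _
    _ ≤ specNorm (Ct - C) ^ 2 * (x ⬝ᵥ x) := dotProduct_mulVec_self_le_specNorm_sq _ _

end Projection

lemma sq_le_mul_of_two_mul_div_sqrt_le {ε η s : ℝ} (hε : 0 < ε) (hη : 0 ≤ η) (hs : 0 ≤ s)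
    (h : 2 * η / Real.sqrt ε ≤ Real.sqrt s) : η ^ 2 ≤ ε * s := by
  rw [div_le_iff₀ (Real.sqrt_pos.2 hε), ← Real.sqrt_mul hs, mul_comm s,
    Real.le_sqrt (by positivity) (by positivity)] at h
  nlinarith

theorem stmt5 {m n d : ℕ} (ε η : ℝ) (hε : ε ∈ Set.Ioo (0:ℝ) 1) (hd : 0 < d)
    (C Ct : Matrix (Fin m) (Fin d) ℝ) (A : Matrix (Fin m) (Fin n) ℝ)
    (P : Matrix (Fin m) (Fin m) ℝ) (hP : IsProjOnto P (colSpan Ct))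
    (hspan : colSpan A ≤ colSpan C)
    (hpert : specNorm (Ct - C) ≤ η)
    (hsig : 2 * η / Real.sqrt ε ≤ Real.sqrt (svalSq C ⟨d-1, by omega⟩)) :
    Real.sqrt (frobSq ((1 - P) * A)) ≤ Real.sqrt ε * Real.sqrt (frobSq A) := by
  have hε0 : 0 < ε := hε.1
  have hnorm : 0 ≤ specNorm (Ct - C) := norm_nonneg _
  have hη : η ^ 2 ≤ ε * svalSq C ⟨d - 1, Nat.sub_one_lt_of_lt hd⟩ :=
    sq_le_mul_of_two_mul_div_sqrt_le hε0 (hnorm.trans hpert)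
      (eigenvalues_conjTranspose_mul_self_nonneg C _) hsig
  have hcol : ∀ j, ((1 - P) *ᵥ A.col j) ⬝ᵥ ((1 - P) *ᵥ A.col j) ≤ ε * (A.col j ⬝ᵥ A.col j) := by
    intro j
    obtain ⟨x, hx⟩ := hspan (col_mem_colSpan A j)
    rw [← show C *ᵥ x = A.col j from hx]
    calc ((1 - P) *ᵥ (C *ᵥ x)) ⬝ᵥ ((1 - P) *ᵥ (C *ᵥ x))
        ≤ specNorm (Ct - C) ^ 2 * (x ⬝ᵥ x) := hP.dotProduct_one_sub_mulVec_le_specNorm x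
      _ ≤ ε * svalSq C ⟨d - 1, Nat.sub_one_lt_of_lt hd⟩ * (x ⬝ᵥ x) :=
        mul_le_mul_of_nonneg_right ((pow_le_pow_left₀ hnorm hpert 2).trans hη)
          (dotProduct_self_star_nonneg x)
      _ ≤ ε * ((C *ᵥ x) ⬝ᵥ (C *ᵥ x)) := by
        rw [mul_assoc]
        exact mul_le_mul_of_nonneg_left (svalSq_last_mul_dotProduct_le hd C x) hε0.le
  have hfrob : frobSq ((1 - P) * A) ≤ ε * frobSq A := by
    simp only [frobSq_eq_sum_dotProduct_col, col_mul, Finset.mul_sum]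
    exact Finset.sum_le_sum fun j _ => hcol j
  rw [← Real.sqrt_mul hε0.le]
  exact Real.sqrt_le_sqrt hfrob
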